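/- arXiv:1702.06686 — 6 statements merged into one kernel-verified Lean document; each statement's English description precedes it below -/
import Mathlib

section
/- For every integer g ≥ 2, the polynomial (1 − X²)(1 − X⁴) divides (1 + X³)^{2g} − X^{2g}(1 + X)^{2g} in ℤ[X]. -/
open Polynomial

/-- For every integer `g ≥ 2`, the polynomial `(1 - X^2)(1 - X^4)` divides
`(1 + X^3)^(2g) - X^(2g)(1 + X)^(2g)` in `ℤ[X]`. -/
theorem divides_HN_numerator (g : ℕ) (hg : 2 ≤ g) :
    ((1 - X ^ 2) * (1 - X ^ 4) : ℤ[X]) ∣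
      (1 + X ^ 3) ^ (2 * g) - X ^ (2 * g) * (1 + X) ^ (2 * g) := by
  set a : ℤ[X] := 1 - X + X ^ 2 with ha
  obtain ⟨c, hc⟩ : (a ^ 2 - (X : ℤ[X]) ^ 2) ∣ (a ^ 2) ^ g - ((X : ℤ[X]) ^ 2) ^ g :=
    sub_dvd_pow_sub_pow _ _ g
  refine ⟨(1 + X) ^ (2 * g - 2) * c, ?_⟩
  have hsplit : ((1 + X : ℤ[X])) ^ (2 * g) = (1 + X) ^ 2 * (1 + X) ^ (2 * g - 2) := by
    rw [← pow_add]
    congr 1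
    omega
  have h1 : ((1 + X : ℤ[X]) ^ 3) = (1 + X) ^ 3 := rfl
  have key : (1 + X ^ 3 : ℤ[X]) ^ (2 * g) - X ^ (2 * g) * (1 + X) ^ (2 * g)
      = (1 + X) ^ (2 * g) * ((a ^ 2) ^ g - ((X : ℤ[X]) ^ 2) ^ g) := by
    have h2 : (1 + X ^ 3 : ℤ[X]) = (1 + X) * a := by ring
    rw [h2, mul_pow, ← pow_mul, ← pow_mul]
    ring
  rw [key, hc, hsplit]
  ring
end

section
/- For every integer g ≥ 2, the quotient polynomial Q_g = ((1 + X³)^{2g} − X^{2g}(1 + X)^{2g}) / ((1 − X²)(1 − X⁴)) in ℤ[X] is palindromic of degree 6g − 6: in the field of rational functions, X^{6g−6} · Q_g(1/X) = Q_g(X); equivalently, the coefficient of X^i in Q_g equals the coefficient of X^{6g−6−i} for all i. This reflects Poincaré duality for the smooth projective variety M_L(2,1). -/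
open Polynomial

private lemma reflect_pow_aux {R : Type*} [CommSemiring R] (f : R[X]) (N : ℕ)
    (hf : f.natDegree ≤ N) (n : ℕ) :
    reflect (N * n) (f ^ n) = (reflect N f) ^ n := by
  induction n with
  | zero =>
    rw [mul_zero, pow_zero, pow_zero]
    simpa using reflect_monomial (R := R) 0 0
  | succ n ih =>
    have h1 : (f ^ n).natDegree ≤ N * n :=
      natDegree_pow_le.trans (by rw [mul_comm]; exact Nat.mul_le_mul hf le_rfl)
    rw [pow_succ, mul_add, mul_one, reflect_mul _ _ h1 hf, ih, pow_succ]

/-- For every integer `g ≥ 2`, the quotient polynomial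
`Q_g = ((1 + X^3)^(2g) - X^(2g)(1 + X)^(2g)) / ((1 - X^2)(1 - X^4))` in `ℤ[X]`
is palindromic of degree `6g - 6`: the coefficient of `X^i` equals the coefficient of
`X^(6g-6-i)` for all `i` (Poincaré duality for the smooth projective variety `M_L(2,1)`). -/
theorem HN_quotient_palindromic (g : ℕ) (hg : 2 ≤ g) (Q : ℤ[X])
    (hQ : ((1 - X ^ 2) * (1 - X ^ 4) : ℤ[X]) * Q =
      (1 + X ^ 3) ^ (2 * g) - X ^ (2 * g) * (1 + X) ^ (2 * g)) :
    Q.natDegree = 6 * g - 6 ∧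
      ∀ i j : ℕ, i + j = 6 * g - 6 → Q.coeff i = Q.coeff j := by
  set D : ℤ[X] := (1 - X ^ 2) * (1 - X ^ 4) with hD
  set N : ℤ[X] := (1 + X ^ 3) ^ (2 * g) - X ^ (2 * g) * (1 + X) ^ (2 * g) with hN
  have hrw3 : (1 + X ^ 3 : ℤ[X]) = X ^ 3 + C 1 := by rw [map_one]; ring
  have hrw1 : (1 + X : ℤ[X]) = X ^ 1 + C 1 := by rw [map_one]; ring
  have hm3 : (1 + X ^ 3 : ℤ[X]).Monic := by rw [hrw3]; exact monic_X_pow_add_C _ (by norm_num)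
  have hm1 : (1 + X : ℤ[X]).Monic := by rw [hrw1]; exact monic_X_pow_add_C _ (by norm_num)
  have h3 : (1 + X ^ 3 : ℤ[X]).natDegree = 3 := by rw [hrw3]; exact natDegree_X_pow_add_C
  have h1 : (1 + X : ℤ[X]).natDegree = 1 := by rw [hrw1]; exact natDegree_X_pow_add_C
  -- degrees of the two pieces of N
  have hdA : ((1 + X ^ 3 : ℤ[X]) ^ (2 * g)).natDegree = 6 * g := by
    rw [hm3.natDegree_pow, h3]; ring
  have hdB : ((X ^ (2 * g) * (1 + X) ^ (2 * g) : ℤ[X])).natDegree = 4 * g := by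
    rw [natDegree_mul (pow_ne_zero _ X_ne_zero) (hm1.pow _).ne_zero, natDegree_X_pow,
      hm1.natDegree_pow, h1]
    ring
  have hdN : N.natDegree = 6 * g := by
    rw [hN, natDegree_sub_eq_left_of_natDegree_lt, hdA]
    rw [hdA, hdB]; omega
  have hNne : N ≠ 0 := by
    intro h; rw [h, natDegree_zero] at hdN; omega
  have hdD : D.natDegree = 6 := by
    rw [hD]; compute_degree!
  have hDne : D ≠ 0 := by
    intro h; rw [h, natDegree_zero] at hdD; omega
  have hQne : Q ≠ 0 := by
    intro h; rw [h, mul_zero] at hQ; exact hNne hQ.symm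
  have hdQ : Q.natDegree = 6 * g - 6 := by
    have h := natDegree_mul hDne hQne
    rw [hQ] at h
    rw [hdN, hdD] at h
    omega
  refine ⟨hdQ, ?_⟩
  have e0 : reflect 6 (1 : ℤ[X]) = X ^ 6 := by
    simpa using reflect_monomial (R := ℤ) 6 0
  have e2 : reflect 6 (X ^ 2 : ℤ[X]) = X ^ 4 := by
    have h := reflect_monomial (R := ℤ) 6 2
    rwa [revAt_le (by norm_num)] at h
  have e4 : reflect 6 (X ^ 4 : ℤ[X]) = X ^ 2 := by
    have h := reflect_monomial (R := ℤ) 6 4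
    rwa [revAt_le (by norm_num)] at h
  have e6 : reflect 6 (X ^ 6 : ℤ[X]) = 1 := by
    have h := reflect_monomial (R := ℤ) 6 6
    rw [revAt_le (by norm_num)] at h
    simpa using h
  -- D is palindromic of degree 6
  have hDref : reflect 6 D = D := by
    have hDe : D = 1 + C (-1) * X ^ 2 + C (-1) * X ^ 4 + X ^ 6 := by
      rw [hD, map_neg, map_one]; ring
    rw [hDe, reflect_add, reflect_add, reflect_add, reflect_C_mul, reflect_C_mul,
      e0, e2, e4, e6, map_neg, map_one]
    ring
  -- N is palindromic of degree 6g
  have hAref : reflect (6 * g) ((1 + X ^ 3 : ℤ[X]) ^ (2 * g)) = (1 + X ^ 3) ^ (2 * g) := by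
    have h := reflect_pow_aux (1 + X ^ 3 : ℤ[X]) 3 h3.le (2 * g)
    have h6 : 3 * (2 * g) = 6 * g := by ring
    rw [h6] at h
    rw [h]
    congr 1
    have f0 : reflect 3 (1 : ℤ[X]) = X ^ 3 := by
      simpa using reflect_monomial (R := ℤ) 3 0
    have f3 : reflect 3 (X ^ 3 : ℤ[X]) = 1 := by
      have h' := reflect_monomial (R := ℤ) 3 3
      rw [revAt_le (by norm_num)] at h'
      simpa using h'
    rw [reflect_add, f0, f3, add_comm]
  have hBref : reflect (6 * g) ((X ^ (2 * g) * (1 + X) ^ (2 * g) : ℤ[X])) =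
      X ^ (2 * g) * (1 + X) ^ (2 * g) := by
    have hb1 : (X ^ (2 * g) : ℤ[X]).natDegree ≤ 4 * g := by
      rw [natDegree_X_pow]; omega
    have hb2 : ((1 + X : ℤ[X]) ^ (2 * g)).natDegree ≤ 2 * g := by
      rw [hm1.natDegree_pow, h1]; omega
    have h46 : 4 * g + 2 * g = 6 * g := by ring
    rw [← h46, reflect_mul _ _ hb1 hb2]
    have eX : reflect (4 * g) (X ^ (2 * g) : ℤ[X]) = X ^ (2 * g) := by
      have h' := reflect_monomial (R := ℤ) (4 * g) (2 * g)
      rw [revAt_le (by omega)] at h'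
      rw [h']
      congr 1; omega
    have eP : reflect (2 * g) ((1 + X : ℤ[X]) ^ (2 * g)) = (1 + X) ^ (2 * g) := by
      have h' := reflect_pow_aux (1 + X : ℤ[X]) 1 h1.le (2 * g)
      rw [one_mul] at h'
      rw [h']
      congr 1
      have f0 : reflect 1 (1 : ℤ[X]) = X := by
        simpa using reflect_monomial (R := ℤ) 1 0
      have f1 : reflect 1 (X : ℤ[X]) = 1 := by
        have h'' := reflect_monomial (R := ℤ) 1 1
        rw [revAt_le (by norm_num)] at h''
        simpa using h''
      rw [reflect_add, f0, f1, add_comm]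
    rw [eX, eP]
  have hNref : reflect (6 * g) N = N := by
    have hNe : N = (1 + X ^ 3) ^ (2 * g) + C (-1) * (X ^ (2 * g) * (1 + X) ^ (2 * g)) := by
      rw [hN, map_neg, map_one]; ring
    rw [hNe, reflect_add, reflect_C_mul, hAref, hBref]
  -- combine
  have hQref : reflect (6 * g - 6) Q = Q := by
    have hsum : 6 + (6 * g - 6) = 6 * g := by omega
    have key := reflect_mul D Q hdD.le hdQ.le
    rw [hsum, hQ, hNref, hDref] at key
    exact (mul_left_cancel₀ hDne (hQ.trans key)).symm
  intro i j hij
  have hi : i ≤ 6 * g - 6 := by omega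
  have h := congrArg (fun p => coeff p i) hQref
  simp only [coeff_reflect, revAt_le hi] at h
  rw [← h]
  congr 1
  omega
end

section
/- For all integers g₁, g₂ ≥ 3, the polynomial p ∈ ℚ[X] whose image in ℚ(X) equals P₁₂(g₁,g₂) satisfies p(−1) = 0; that is, the topological Euler characteristic of the component M₁₂, obtained by evaluating its Poincaré polynomial at t = −1, vanishes. -/
open Polynomial

/-- `Q_g = ((1+X³)^{2g} − X^{2g}(1+X)^{2g}) / ((1−X²)(1−X⁴))` in `ℚ(X)`:
the Harder–Narasimhan Poincaré polynomial of the moduli space of rank-2 stable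
bundles of fixed odd-degree determinant on a smooth projective curve of genus `g`. -/
noncomputable def Qg (g : ℕ) : RatFunc ℚ :=
  ((1 + RatFunc.X ^ 3) ^ (2 * g) - RatFunc.X ^ (2 * g) * (1 + RatFunc.X) ^ (2 * g)) /
    ((1 - RatFunc.X ^ 2) * (1 - RatFunc.X ^ 4))

/-- `J_g = (1+X)^{2g}`, the Poincaré polynomial of the Jacobian. -/
noncomputable def Jg (g : ℕ) : RatFunc ℚ := (1 + RatFunc.X) ^ (2 * g)

/-- `Pⁿ = 1 + X² + ⋯ + X^{2n}`, the Poincaré polynomial of `ℙⁿ`. -/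
noncomputable def Pn (n : ℕ) : RatFunc ℚ := ∑ i ∈ Finset.range (n + 1), RatFunc.X ^ (2 * i)

/-- `K_g = 1 + X^{2g} + Σ_{0<i<2g, i even} (C(2g,i) + 2^{2g}) X^i`,
the Poincaré polynomial of the desingularized Kummer variety. -/
noncomputable def Kg (g : ℕ) : RatFunc ℚ :=
  1 + RatFunc.X ^ (2 * g) +
    ∑ i ∈ (Finset.Ioo 0 (2 * g)).filter (fun i => Even i),
      (((2 * g).choose i : RatFunc ℚ) + 2 ^ (2 * g)) * RatFunc.X ^ i

/-- `β̃₁` from Theorem 4.2 of the paper. -/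
noncomputable def betaT1 (g₂ : ℕ) : RatFunc ℚ :=
  Kg g₂ * RatFunc.X ^ (4 * g₂ - 4) / (1 + RatFunc.X ^ 2) +
    Jg g₂ * (RatFunc.X ^ (4 * g₂ - 2) / (1 - RatFunc.X ^ 4) +
      Pn (g₂ - 2) * RatFunc.X ^ (2 * g₂ - 2)) -
    2 ^ (2 * g₂) * Pn (g₂ - 1) * RatFunc.X ^ (4 * g₂ - 2) / (1 + RatFunc.X ^ 2) -
    2 ^ (2 * g₂) * (RatFunc.X ^ (6 * g₂ - 2) / (1 - RatFunc.X ^ 4) +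
      Pn (g₂ - 2) * RatFunc.X ^ (4 * g₂ - 2))

/-- `β̃₂` from Theorem 4.2 of the paper. -/
noncomputable def betaT2 (g₂ : ℕ) : RatFunc ℚ :=
  2 ^ (2 * g₂) * (RatFunc.X ^ (6 * g₂) / (1 - RatFunc.X ^ 4) +
    RatFunc.X ^ (4 * g₂ - 2) * Pn (g₂ - 1))

/-- `P₁₂(g₁,g₂) ∈ ℚ(X)`, the Poincaré polynomial of the component `M₁₂` of the moduli
space of rank-2 stable torsion-free sheaves with fixed determinant on a nodal curve
`X₁ ∪ X₂` whose smooth components have genera `g₁, g₂` (Theorem 4.2 of the paper). -/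
noncomputable def P12 (g₁ g₂ : ℕ) : RatFunc ℚ :=
  Qg g₁ * (1 - RatFunc.X ^ 4) *
      (Qg g₂ + Jg g₂ * RatFunc.X ^ (2 * g₂) / (1 - RatFunc.X ^ 4) - (betaT1 g₂ + betaT2 g₂)) +
    Qg g₁ * 2 ^ (2 * g₂) *
      (RatFunc.X ^ (6 * g₂) + RatFunc.X ^ (4 * g₂ - 2) * (1 - RatFunc.X ^ 4) * Pn (g₂ - 1)) +
    Qg g₁ *
      (Kg g₂ * RatFunc.X ^ (4 * g₂ - 4) * (1 - RatFunc.X ^ 2) +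
        Jg g₂ * (RatFunc.X ^ (4 * g₂ - 2) +
          RatFunc.X ^ (2 * g₂ - 2) * (1 - RatFunc.X ^ 4) * Pn (g₂ - 2)) -
        2 ^ (2 * g₂) *
          (RatFunc.X ^ (6 * g₂ - 2) +
            RatFunc.X ^ (4 * g₂ - 2) * (1 - RatFunc.X ^ 4) * Pn (g₂ - 2) +
            RatFunc.X ^ (4 * g₂ - 2) * (1 - RatFunc.X ^ 2) * Pn (g₂ - 1))) +
    Qg g₁ * Qg g₂ * RatFunc.X ^ 2 * (1 + 2 * RatFunc.X ^ 2 + RatFunc.X ^ 4)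


/-!
The β̃-terms of `P12` cancel against its second and third summands, leaving
`P₁₂ = Q_{g₁} · ((1 + X²)(1 + X⁴) Q_{g₂} + J_{g₂} X^{2g₂})`.
Since `1 + X³ = (1 + X)(1 − X + X²)`, the numerator of `Q_g` over `(1 − X²)(1 − X⁴)` is
divisible by `(1 + X)^{2g}`, whereas the denominator vanishes only to order 2 at `−1`.
Clearing it twice shows that `p · (1 − X²)²(1 − X⁴)²` is divisible by `(1 + X)^{2g₁}`;
as `2g₁ > 4`, `p` vanishes at `−1`.
-/

namespace Polynomial

theorem eval_eq_zero_of_mul_X_sub_C_pow_eq {R : Type*} [CommRing R] [IsDomain R]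
    {p u v : R[X]} {a : R} {n : ℕ} (hu : u.eval a ≠ 0)
    (h : p * ((X - C a) ^ n * u) = (X - C a) ^ (n + 1) * v) : p.eval a = 0 := by
  have hcancel : p * u = (X - C a) * v :=
    mul_left_cancel₀ (pow_ne_zero n (X_sub_C_ne_zero a)) (by linear_combination h)
  simpa [hu] using congrArg (eval a) hcancel

end Polynomial

namespace RatFunc

variable {K : Type*} [Field K] {n : ℕ}

theorem one_sub_X_pow_ne_zero (hn : n ≠ 0) : (1 - X ^ n : K⟮X⟯) ≠ 0 := by
  rw [← algebraMap_X, ← map_pow, ← map_one (algebraMap K[X] K⟮X⟯), ← map_sub]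
  exact (map_ne_zero_iff _ (algebraMap_injective K)).mpr fun h => by
    simpa [hn] using congrArg (Polynomial.eval 0) h

theorem one_add_X_pow_ne_zero (hn : n ≠ 0) : (1 + X ^ n : K⟮X⟯) ≠ 0 := by
  rw [← algebraMap_X, ← map_pow, ← map_one (algebraMap K[X] K⟮X⟯), ← map_add]
  exact (map_ne_zero_iff _ (algebraMap_injective K)).mpr fun h => by
    simpa [hn] using congrArg (Polynomial.eval 0) h

end RatFunc

noncomputable def qgDenom : ℚ[X] := (1 - X ^ 2) * (1 - X ^ 4)

noncomputable def qgNum (g : ℕ) : ℚ[X] :=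
  (1 + X) ^ (2 * g) * ((1 - X + X ^ 2) ^ (2 * g) - X ^ (2 * g))

theorem Qg_mul_qgDenom (g : ℕ) :
    Qg g * algebraMap ℚ[X] (RatFunc ℚ) qgDenom = algebraMap ℚ[X] (RatFunc ℚ) (qgNum g) := by
  have hD : (1 - RatFunc.X ^ 2) * (1 - RatFunc.X ^ 4) ≠ (0 : RatFunc ℚ) :=
    mul_ne_zero (RatFunc.one_sub_X_pow_ne_zero two_ne_zero)
      (RatFunc.one_sub_X_pow_ne_zero four_ne_zero)
  simp only [qgDenom, qgNum, map_mul, map_sub, map_add, map_pow, map_one, RatFunc.algebraMap_X]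
  rw [Qg, div_mul_cancel₀ _ hD, show (1 + RatFunc.X ^ 3 : RatFunc ℚ) =
    (1 + RatFunc.X) * (1 - RatFunc.X + RatFunc.X ^ 2) by ring, mul_pow]
  ring

theorem P12_eq_Qg_mul (g₁ g₂ : ℕ) :
    P12 g₁ g₂ =
      Qg g₁ * ((1 + RatFunc.X ^ 2) * (1 + RatFunc.X ^ 4) * Qg g₂ +
        Jg g₂ * RatFunc.X ^ (2 * g₂)) := by
  have := RatFunc.one_add_X_pow_ne_zero (K := ℚ) two_ne_zero
  have := RatFunc.one_sub_X_pow_ne_zero (K := ℚ) four_ne_zero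
  unfold P12 betaT1 betaT2
  field_simp
  ring

theorem P12_mul_qgDenom_sq (g₁ g₂ : ℕ) :
    P12 g₁ g₂ * algebraMap ℚ[X] (RatFunc ℚ) (qgDenom ^ 2) =
      algebraMap ℚ[X] (RatFunc ℚ) (qgNum g₁ *
        ((1 + X ^ 2) * (1 + X ^ 4) * qgNum g₂ +
          (1 + X) ^ (2 * g₂) * X ^ (2 * g₂) * qgDenom)) := by
  rw [P12_eq_Qg_mul, Jg]
  simp only [map_mul, map_add, map_pow, map_one, RatFunc.algebraMap_X]
  linear_combination
    ((1 + RatFunc.X ^ 2) * (1 + RatFunc.X ^ 4) * Qg g₂ +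
      (1 + RatFunc.X) ^ (2 * g₂) * RatFunc.X ^ (2 * g₂)) *
        algebraMap ℚ[X] (RatFunc ℚ) qgDenom * Qg_mul_qgDenom g₁ +
    algebraMap ℚ[X] (RatFunc ℚ) (qgNum g₁) * (1 + RatFunc.X ^ 2) * (1 + RatFunc.X ^ 4) *
      Qg_mul_qgDenom g₂

theorem P12_euler_char_zero_general (g₁ g₂ : ℕ) (h₁ : 3 ≤ g₁) (p : ℚ[X])
    (hp : algebraMap ℚ[X] (RatFunc ℚ) p = P12 g₁ g₂) :
    p.eval (-1) = 0 := by
  set c := (1 + X ^ 2) * (1 + X ^ 4) * qgNum g₂ +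
    (1 + X) ^ (2 * g₂) * X ^ (2 * g₂) * qgDenom
  have hpoly : p * qgDenom ^ 2 = qgNum g₁ * c :=
    RatFunc.algebraMap_injective ℚ (by rw [map_mul, hp, P12_mul_qgDenom_sq])
  obtain ⟨k, rfl⟩ : ∃ k, g₁ = k + 3 := ⟨g₁ - 3, by omega⟩
  refine eval_eq_zero_of_mul_X_sub_C_pow_eq (n := 4) (u := (1 - X) ^ 4 * (1 + X ^ 2) ^ 2)
    (v := (1 + X) ^ (2 * k + 1) * ((1 - X + X ^ 2) ^ (2 * (k + 3)) - X ^ (2 * (k + 3))) * c)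
    (by norm_num) ?_
  rw [qgNum, qgDenom] at hpoly
  rw [C_neg, C_1, sub_neg_eq_add]
  linear_combination hpoly

/-- For all integers `g₁, g₂ ≥ 3`, the polynomial `p ∈ ℚ[X]` whose image in `ℚ(X)` equals
`P₁₂(g₁,g₂)` satisfies `p(−1) = 0`: the topological Euler characteristic of the
component `M₁₂` vanishes. -/
theorem P12_euler_char_zero (g₁ g₂ : ℕ) (h₁ : 3 ≤ g₁) (h₂ : 3 ≤ g₂) (p : ℚ[X])
    (hp : algebraMap ℚ[X] (RatFunc ℚ) p = P12 g₁ g₂) :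
    p.eval (-1) = 0 :=
  P12_euler_char_zero_general g₁ g₂ h₁ p hp
end

section
/- For all integers g₁, g₂ ≥ 3, every coefficient of the polynomial p ∈ ℚ[X] whose image in ℚ(X) equals P₁₂(g₁,g₂) is a nonnegative integer (the coefficients are the Betti numbers of the smooth projective variety M₁₂). -/
open Polynomial

noncomputable def Fn (g : ℕ) : Polynomial ℕ :=
  ∑ j ∈ Finset.range g, ((2 * g).choose j : Polynomial ℕ) * (Polynomial.X ^ 3) ^ j *
    (∑ k ∈ Finset.range (g - j), (Polynomial.X ^ 2) ^ k) *
    (∑ m ∈ Finset.range (g - j), (Polynomial.X ^ 4) ^ m)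

noncomputable def Gn (g₁ g₂ : ℕ) : Polynomial ℕ :=
  Fn g₁ * ((1 + Polynomial.X ^ 2 + Polynomial.X ^ 4 + Polynomial.X ^ 6) * Fn g₂ +
    Polynomial.X ^ (2 * g₂) * (1 + Polynomial.X) ^ (2 * g₂))

lemma key₁ (g : ℕ) :
    ((Fn g).map (Nat.castRingHom ℚ)) * ((1 - X ^ 2) * (1 - X ^ 4)) =
      (1 + X ^ 3) ^ (2 * g) - X ^ (2 * g) * (1 + X) ^ (2 * g) := by
  have hmap : (Fn g).map (Nat.castRingHom ℚ) =
      ∑ j ∈ Finset.range g, (((2 * g).choose j : ℚ[X]) * (X ^ 3) ^ j *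
        (∑ k ∈ Finset.range (g - j), (X ^ 2) ^ k) *
        (∑ m ∈ Finset.range (g - j), (X ^ 4) ^ m)) := by
    simp [Fn, Polynomial.map_sum, Polynomial.map_mul, Polynomial.map_pow,
      Polynomial.map_natCast, Polynomial.map_X]
  set t : ℕ → ℚ[X] := fun i => ((2 * g).choose i : ℚ[X]) * ((X ^ 3) ^ i - X ^ (2 * g) * X ^ i)
    with ht
  have hR : (1 + X ^ 3 : ℚ[X]) ^ (2 * g) - X ^ (2 * g) * (1 + X) ^ (2 * g) =
      ∑ i ∈ Finset.range (2 * g + 1), t i := by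
    rw [add_comm (1 : ℚ[X]) (X ^ 3), add_comm (1 : ℚ[X]) X, add_pow, add_pow,
      Finset.mul_sum, ← Finset.sum_sub_distrib]
    refine Finset.sum_congr rfl fun i _ => ?_
    simp only [ht, one_pow, mul_one]
    ring
  rw [hmap, hR]
  have hsplit : ∑ i ∈ Finset.range (2 * g + 1), t i =
      ∑ j ∈ Finset.range g, (t j + t (g + 1 + (g - 1 - j))) := by
    rw [show 2 * g + 1 = (g + 1) + g by ring, Finset.sum_range_add,
      Finset.sum_range_succ, ← Finset.sum_range_reflect (fun i => t (g + 1 + i)) g,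
      Finset.sum_add_distrib]
    have htg : t g = 0 := by
      have : ((X : ℚ[X]) ^ 3) ^ g = X ^ (2 * g) * X ^ g := by
        rw [← pow_mul, ← pow_add]; ring_nf
      simp [ht, this]
    rw [htg, add_zero]
  rw [hsplit, Finset.sum_mul]
  refine Finset.sum_congr rfl fun j hj => ?_
  rw [Finset.mem_range] at hj
  obtain ⟨d, rfl⟩ : ∃ d, g = j + d + 1 := ⟨g - j - 1, by omega⟩
  rw [show j + d + 1 - j = d + 1 by omega,
    show (j + d + 1) + 1 + ((j + d + 1) - 1 - j) = j + 2 * d + 2 by omega]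
  have hch : ((2 * (j + d + 1)).choose (j + 2 * d + 2)) = (2 * (j + d + 1)).choose j := by
    rw [show j + 2 * d + 2 = 2 * (j + d + 1) - j by omega]
    exact Nat.choose_symm (by omega)
  have h2 := geom_sum_mul_neg ((X : ℚ[X]) ^ 2) (d + 1)
  have h4 := geom_sum_mul_neg ((X : ℚ[X]) ^ 4) (d + 1)
  calc ((2 * (j + d + 1)).choose j : ℚ[X]) * (X ^ 3) ^ j *
        (∑ k ∈ Finset.range (d + 1), (X ^ 2) ^ k) *
        (∑ m ∈ Finset.range (d + 1), (X ^ 4) ^ m) * ((1 - X ^ 2) * (1 - X ^ 4))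
      = ((2 * (j + d + 1)).choose j : ℚ[X]) * (X ^ 3) ^ j *
        ((∑ k ∈ Finset.range (d + 1), (X ^ 2) ^ k) * (1 - X ^ 2)) *
        ((∑ m ∈ Finset.range (d + 1), (X ^ 4) ^ m) * (1 - X ^ 4)) := by ring
    _ = ((2 * (j + d + 1)).choose j : ℚ[X]) * (X ^ 3) ^ j *
        (1 - (X ^ 2) ^ (d + 1)) * (1 - (X ^ 4) ^ (d + 1)) := by rw [h2, h4]
    _ = t j + t (j + 2 * d + 2) := by
        simp only [ht, hch]
        ring

lemma hne2' : ((1 : RatFunc ℚ) + RatFunc.X ^ 2) ≠ 0 := by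
  have h : ((1 : RatFunc ℚ) + RatFunc.X ^ 2) =
      algebraMap ℚ[X] (RatFunc ℚ) (1 + X ^ 2) := by
    simp [map_add, map_pow, map_one, RatFunc.algebraMap_X]
  rw [h]
  exact RatFunc.algebraMap_ne_zero (fun h => by
    have := congrArg (Polynomial.eval 0) h; simp at this)

lemma hne2 : ((1 : RatFunc ℚ) - RatFunc.X ^ 2) ≠ 0 := by
  have h : ((1 : RatFunc ℚ) - RatFunc.X ^ 2) =
      algebraMap ℚ[X] (RatFunc ℚ) (1 - X ^ 2) := by
    simp [map_sub, map_pow, map_one, RatFunc.algebraMap_X]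
  rw [h]
  exact RatFunc.algebraMap_ne_zero (fun h => by
    have := congrArg (Polynomial.eval 0) h; simp at this)

lemma hne4 : ((1 : RatFunc ℚ) - RatFunc.X ^ 4) ≠ 0 := by
  have h : ((1 : RatFunc ℚ) - RatFunc.X ^ 4) =
      algebraMap ℚ[X] (RatFunc ℚ) (1 - X ^ 4) := by
    simp [map_sub, map_pow, map_one, RatFunc.algebraMap_X]
  rw [h]
  exact RatFunc.algebraMap_ne_zero (fun h => by
    have := congrArg (Polynomial.eval 0) h; simp at this)

lemma key₂ (g : ℕ) :
    algebraMap ℚ[X] (RatFunc ℚ) ((Fn g).map (Nat.castRingHom ℚ)) = Qg g := by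
  rw [Qg, eq_div_iff (mul_ne_zero hne2 hne4)]
  have h := congrArg (algebraMap ℚ[X] (RatFunc ℚ)) (key₁ g)
  simpa only [map_mul, map_sub, map_add, map_pow, map_one, RatFunc.algebraMap_X] using h

lemma L2 (g : ℕ) : (1 - RatFunc.X ^ 4) * betaT2 g =
    2 ^ (2 * g) * (RatFunc.X ^ (6 * g) +
      RatFunc.X ^ (4 * g - 2) * (1 - RatFunc.X ^ 4) * Pn (g - 1)) := by
  have h4 := hne4
  rw [betaT2]
  field_simp

lemma L1 (g : ℕ) : (1 - RatFunc.X ^ 4) * betaT1 g =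
    Kg g * RatFunc.X ^ (4 * g - 4) * (1 - RatFunc.X ^ 2) +
      Jg g * (RatFunc.X ^ (4 * g - 2) +
        RatFunc.X ^ (2 * g - 2) * (1 - RatFunc.X ^ 4) * Pn (g - 2)) -
      2 ^ (2 * g) *
        (RatFunc.X ^ (6 * g - 2) +
          RatFunc.X ^ (4 * g - 2) * (1 - RatFunc.X ^ 4) * Pn (g - 2) +
          RatFunc.X ^ (4 * g - 2) * (1 - RatFunc.X ^ 2) * Pn (g - 1)) := by
  have h2 := hne2'
  have h4 := hne4
  rw [betaT1]
  field_simp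
  ring

lemma key₃ (g₁ g₂ : ℕ) :
    P12 g₁ g₂ = Qg g₁ * ((1 + RatFunc.X ^ 2 + RatFunc.X ^ 4 + RatFunc.X ^ 6) * Qg g₂ +
      Jg g₂ * RatFunc.X ^ (2 * g₂)) := by
  have h4 := hne4
  have hJ : Qg g₁ * (1 - RatFunc.X ^ 4) *
      (Qg g₂ + Jg g₂ * RatFunc.X ^ (2 * g₂) / (1 - RatFunc.X ^ 4) - (betaT1 g₂ + betaT2 g₂)) =
      Qg g₁ * (1 - RatFunc.X ^ 4) * Qg g₂ + Qg g₁ * (Jg g₂ * RatFunc.X ^ (2 * g₂)) -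
        Qg g₁ * ((1 - RatFunc.X ^ 4) * betaT1 g₂) -
        Qg g₁ * ((1 - RatFunc.X ^ 4) * betaT2 g₂) := by
    field_simp
    ring
  rw [P12, hJ, L1, L2]
  ring

lemma keyG (g₁ g₂ : ℕ) :
    algebraMap ℚ[X] (RatFunc ℚ) ((Gn g₁ g₂).map (Nat.castRingHom ℚ)) = P12 g₁ g₂ := by
  have hmap : algebraMap ℚ[X] (RatFunc ℚ) ((Gn g₁ g₂).map (Nat.castRingHom ℚ)) =
      algebraMap ℚ[X] (RatFunc ℚ) ((Fn g₁).map (Nat.castRingHom ℚ)) *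
        ((1 + RatFunc.X ^ 2 + RatFunc.X ^ 4 + RatFunc.X ^ 6) *
          algebraMap ℚ[X] (RatFunc ℚ) ((Fn g₂).map (Nat.castRingHom ℚ)) +
          RatFunc.X ^ (2 * g₂) * (1 + RatFunc.X) ^ (2 * g₂)) := by
    simp only [Gn, Polynomial.map_mul, Polynomial.map_add, Polynomial.map_pow,
      Polynomial.map_one, Polynomial.map_X, map_mul, map_add, map_pow, map_one,
      RatFunc.algebraMap_X]
  rw [hmap, key₂, key₂, key₃, Jg]
  ring

/-- For all integers `g₁, g₂ ≥ 3`, every coefficient of the polynomial `p ∈ ℚ[X]` whose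
image in `ℚ(X)` equals `P₁₂(g₁,g₂)` is a nonnegative integer (the coefficients are the
Betti numbers of the smooth projective variety `M₁₂`). -/
theorem P12_coeffs_nonneg_integers (g₁ g₂ : ℕ) (h₁ : 3 ≤ g₁) (h₂ : 3 ≤ g₂) (p : ℚ[X])
    (hp : algebraMap ℚ[X] (RatFunc ℚ) p = P12 g₁ g₂) :
    ∀ i : ℕ, ∃ n : ℕ, p.coeff i = (n : ℚ) := by
  have hpG : p = (Gn g₁ g₂).map (Nat.castRingHom ℚ) :=
    RatFunc.algebraMap_injective ℚ (hp.trans (keyG g₁ g₂).symm)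
  intro i
  exact ⟨(Gn g₁ g₂).coeff i, by rw [hpG, Polynomial.coeff_map]; simp⟩
end

section
/- For all integers g₁, g₂ ≥ 3, the coefficient of X¹ in the polynomial representing P₁₂(g₁,g₂) is 0; that is, the first Betti number of the component M₁₂ vanishes, consistent with M₁₂ being simply connected. -/
open Polynomial

noncomputable def ApP (g : ℕ) : ℚ[X] := (1 + X ^ 3) ^ (2 * g) - X ^ (2 * g) * (1 + X) ^ (2 * g)
noncomputable def JgP (g : ℕ) : ℚ[X] := (1 + X) ^ (2 * g)
noncomputable def PnP (n : ℕ) : ℚ[X] := ∑ i ∈ Finset.range (n + 1), X ^ (2 * i)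
noncomputable def KgP (g : ℕ) : ℚ[X] :=
  1 + X ^ (2 * g) +
    ∑ i ∈ (Finset.Ioo 0 (2 * g)).filter (fun i => Even i),
      (((2 * g).choose i : ℚ[X]) + 2 ^ (2 * g)) * X ^ i

lemma Jg_eq (g : ℕ) : Jg g = algebraMap ℚ[X] (RatFunc ℚ) (JgP g) := by
  simp [Jg, JgP, map_pow, map_add, RatFunc.algebraMap_X]
lemma Pn_eq (n : ℕ) : Pn n = algebraMap ℚ[X] (RatFunc ℚ) (PnP n) := by
  simp [Pn, PnP, map_sum, map_pow, RatFunc.algebraMap_X]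
lemma Kg_eq (g : ℕ) : Kg g = algebraMap ℚ[X] (RatFunc ℚ) (KgP g) := by
  simp [Kg, KgP, map_sum, map_pow, map_add, map_mul, map_natCast, map_ofNat,
    RatFunc.algebraMap_X]
lemma Qg_eq (g : ℕ) : Qg g = algebraMap ℚ[X] (RatFunc ℚ) (ApP g) /
    algebraMap ℚ[X] (RatFunc ℚ) ((1 - X ^ 2) * (1 - X ^ 4)) := by
  simp [Qg, ApP, map_mul, map_sub, map_pow, map_add, RatFunc.algebraMap_X]

lemma h2ne : (1 - X ^ 2 : ℚ[X]) ≠ 0 := fun h => by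
  have := congrArg (fun q => Polynomial.coeff q 0) h; simp at this
lemma h4ne : (1 - X ^ 4 : ℚ[X]) ≠ 0 := fun h => by
  have := congrArg (fun q => Polynomial.coeff q 0) h; simp at this
lemma hcne : (1 + X ^ 2 : ℚ[X]) ≠ 0 := fun h => by
  have := congrArg (fun q => Polynomial.coeff q 0) h; simp at this

lemma H4ne : (1 - RatFunc.X ^ 4 : RatFunc ℚ) ≠ 0 := by
  have h : (1 - RatFunc.X ^ 4 : RatFunc ℚ) = algebraMap ℚ[X] (RatFunc ℚ) (1 - X ^ 4) := by
    simp [map_sub, map_pow, RatFunc.algebraMap_X]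
  rw [h]; exact RatFunc.algebraMap_ne_zero h4ne
lemma Hcne : (1 + RatFunc.X ^ 2 : RatFunc ℚ) ≠ 0 := by
  have h : (1 + RatFunc.X ^ 2 : RatFunc ℚ) = algebraMap ℚ[X] (RatFunc ℚ) (1 + X ^ 2) := by
    simp [map_add, map_pow, RatFunc.algebraMap_X]
  rw [h]; exact RatFunc.algebraMap_ne_zero hcne
lemma HDne : algebraMap ℚ[X] (RatFunc ℚ) ((1 - X ^ 2) * (1 - X ^ 4)) ≠ 0 :=
  RatFunc.algebraMap_ne_zero (mul_ne_zero h2ne h4ne)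

lemma QgD (g : ℕ) : Qg g * algebraMap ℚ[X] (RatFunc ℚ) ((1 - X ^ 2) * (1 - X ^ 4))
    = algebraMap ℚ[X] (RatFunc ℚ) (ApP g) := by
  rw [Qg_eq, div_mul_cancel₀ _ HDne]

noncomputable def C1 (k : ℕ) : ℚ[X] :=
  JgP (k+3) * X^(2*k+4) * ((1-X^2) * (1-X^4))
noncomputable def B1 (k : ℕ) : ℚ[X] :=
  KgP (k+3) * X^(4*k+6) * ((1-X^2) * (1-X^2) * (1-X^4))
  + JgP (k+3) * (X^(4*k+8) * ((1-X^2) * (1-X^4))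
      + PnP (k+1) * X^(2*k+2) * ((1-X^2) * (1-X^4) * (1-X^4)))
  - 2^(2*(k+3)) * PnP (k+2) * X^(4*k+8) * ((1-X^2) * (1-X^2) * (1-X^4))
  - 2^(2*(k+3)) * (X^(6*k+14) * ((1-X^2) * (1-X^4))
      + PnP (k+1) * X^(4*k+8) * ((1-X^2) * (1-X^4) * (1-X^4)))
noncomputable def B2 (k : ℕ) : ℚ[X] :=
  2^(2*(k+3)) * (X^(6*k+16) * ((1-X^2) * (1-X^4))
      + X^(4*k+8) * PnP (k+2) * ((1-X^2) * (1-X^4) * (1-X^4)))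
noncomputable def C2 (k : ℕ) : ℚ[X] :=
  2^(2*(k+3)) * (X^(6*k+16) + X^(4*k+8) * (1-X^4) * PnP (k+2)) * ((1-X^2) * (1-X^4))
noncomputable def C3 (k : ℕ) : ℚ[X] :=
  (KgP (k+3) * X^(4*k+6) * (1-X^2)
    + JgP (k+3) * (X^(4*k+8) + X^(2*k+2) * (1-X^4) * PnP (k+1))
    - 2^(2*(k+3)) * (X^(6*k+14) + X^(4*k+8) * (1-X^4) * PnP (k+1)
        + X^(4*k+8) * (1-X^2) * PnP (k+2))) * ((1-X^2) * (1-X^4))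
noncomputable def C4 (k : ℕ) : ℚ[X] :=
  ApP (k+3) * (1 + 2*X^2 + X^4)
noncomputable def RR (k : ℕ) : ℚ[X] := C1 k - B1 k - B2 k + C2 k + C3 k + C4 k

set_option maxHeartbeats 1000000 in
lemma betaT1_clear (k : ℕ) :
    betaT1 (k+3) * ((1 - RatFunc.X ^ 4) * algebraMap ℚ[X] (RatFunc ℚ) ((1 - X ^ 2) * (1 - X ^ 4)))
      = algebraMap ℚ[X] (RatFunc ℚ) (X ^ 2 * B1 k) := by
  have e1 : 4*(k+3)-4 = 4*k+8 := by omega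
  have e2 : 4*(k+3)-2 = 4*k+10 := by omega
  have e3 : 2*(k+3)-2 = 2*k+4 := by omega
  have e4 : 6*(k+3)-2 = 6*k+16 := by omega
  have e7 : k+3-1 = k+2 := by omega
  have e8 : k+3-2 = k+1 := by omega
  simp only [betaT1, B1, e1, e2, e3, e4, e7, e8, Jg_eq, Pn_eq, Kg_eq,
    map_mul, map_add, map_sub, map_pow, map_ofNat, map_one, map_natCast, RatFunc.algebraMap_X]
  field_simp [Hcne, H4ne]
  ring

set_option maxHeartbeats 1000000 in
lemma betaT2_clear (k : ℕ) :
    betaT2 (k+3) * ((1 - RatFunc.X ^ 4) * algebraMap ℚ[X] (RatFunc ℚ) ((1 - X ^ 2) * (1 - X ^ 4)))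
      = algebraMap ℚ[X] (RatFunc ℚ) (X ^ 2 * B2 k) := by
  have e2 : 4*(k+3)-2 = 4*k+10 := by omega
  have e5 : 6*(k+3) = 6*k+18 := by omega
  have e7 : k+3-1 = k+2 := by omega
  simp only [betaT2, B2, e2, e5, e7, Pn_eq,
    map_mul, map_add, map_sub, map_pow, map_ofNat, map_one, map_natCast, RatFunc.algebraMap_X]
  field_simp [Hcne, H4ne]
  ring

set_option maxHeartbeats 1000000 in
lemma hJc (k : ℕ) :
    Jg (k+3) * RatFunc.X ^ (2*(k+3)) / (1 - RatFunc.X ^ 4) *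
      ((1 - RatFunc.X ^ 4) * algebraMap ℚ[X] (RatFunc ℚ) ((1 - X ^ 2) * (1 - X ^ 4)))
      = algebraMap ℚ[X] (RatFunc ℚ) (X ^ 2 * C1 k) := by
  have h : Jg (k+3) * RatFunc.X ^ (2*(k+3)) / (1 - RatFunc.X ^ 4) *
      ((1 - RatFunc.X ^ 4) * algebraMap ℚ[X] (RatFunc ℚ) ((1 - X ^ 2) * (1 - X ^ 4)))
      = Jg (k+3) * RatFunc.X ^ (2*(k+3)) *
        algebraMap ℚ[X] (RatFunc ℚ) ((1 - X ^ 2) * (1 - X ^ 4)) := by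
    field_simp [H4ne]
  rw [h]
  have e6 : 2*(k+3) = 2*k+6 := by omega
  simp only [e6, C1, Jg_eq, map_mul, map_add, map_sub, map_pow, map_ofNat, map_one, map_natCast, RatFunc.algebraMap_X]
  ring

set_option maxHeartbeats 1000000 in
lemma hC2 (k : ℕ) :
    (2 ^ (2*(k+3)) : RatFunc ℚ) *
      (RatFunc.X ^ (6*(k+3)) + RatFunc.X ^ (4*(k+3)-2) * (1 - RatFunc.X ^ 4) * Pn ((k+3)-1)) *
      algebraMap ℚ[X] (RatFunc ℚ) ((1 - X ^ 2) * (1 - X ^ 4))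
      = algebraMap ℚ[X] (RatFunc ℚ) (X ^ 2 * C2 k) := by
  have e2 : 4*(k+3)-2 = 4*k+10 := by omega
  have e5 : 6*(k+3) = 6*k+18 := by omega
  have e7 : k+3-1 = k+2 := by omega
  simp only [e2, e5, e7, C2, Pn_eq, map_mul, map_add, map_sub, map_pow, map_ofNat, map_one, map_natCast,
    RatFunc.algebraMap_X]
  ring

set_option maxHeartbeats 1000000 in
lemma hC3 (k : ℕ) :
    (Kg (k+3) * RatFunc.X ^ (4*(k+3)-4) * (1 - RatFunc.X ^ 2) +
      Jg (k+3) * (RatFunc.X ^ (4*(k+3)-2) +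
        RatFunc.X ^ (2*(k+3)-2) * (1 - RatFunc.X ^ 4) * Pn ((k+3)-2)) -
      2 ^ (2*(k+3)) *
        (RatFunc.X ^ (6*(k+3)-2) +
          RatFunc.X ^ (4*(k+3)-2) * (1 - RatFunc.X ^ 4) * Pn ((k+3)-2) +
          RatFunc.X ^ (4*(k+3)-2) * (1 - RatFunc.X ^ 2) * Pn ((k+3)-1))) *
      algebraMap ℚ[X] (RatFunc ℚ) ((1 - X ^ 2) * (1 - X ^ 4))
      = algebraMap ℚ[X] (RatFunc ℚ) (X ^ 2 * C3 k) := by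
  have e1 : 4*(k+3)-4 = 4*k+8 := by omega
  have e2 : 4*(k+3)-2 = 4*k+10 := by omega
  have e3 : 2*(k+3)-2 = 2*k+4 := by omega
  have e4 : 6*(k+3)-2 = 6*k+16 := by omega
  have e7 : k+3-1 = k+2 := by omega
  have e8 : k+3-2 = k+1 := by omega
  simp only [e1, e2, e3, e4, e7, e8, C3, Jg_eq, Pn_eq, Kg_eq,
    map_mul, map_add, map_sub, map_pow, map_ofNat, map_one, map_natCast, RatFunc.algebraMap_X]
  ring

set_option maxHeartbeats 2000000 in
lemma key (k₁ k₂ : ℕ) :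
    P12 (k₁+3) (k₂+3) * algebraMap ℚ[X] (RatFunc ℚ) (((1 - X ^ 2) * (1 - X ^ 4)) ^ 2)
      = algebraMap ℚ[X] (RatFunc ℚ)
          (ApP (k₁+3) * (ApP (k₂+3) * (1 - X ^ 4) + X ^ 2 * RR k₂)) := by
  have expand : P12 (k₁+3) (k₂+3) * algebraMap ℚ[X] (RatFunc ℚ) (((1 - X ^ 2) * (1 - X ^ 4)) ^ 2)
      = (Qg (k₁+3) * algebraMap ℚ[X] (RatFunc ℚ) ((1 - X ^ 2) * (1 - X ^ 4))) *
        ( (1 - RatFunc.X ^ 4) *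
            (Qg (k₂+3) * algebraMap ℚ[X] (RatFunc ℚ) ((1 - X ^ 2) * (1 - X ^ 4)))
          + Jg (k₂+3) * RatFunc.X ^ (2*(k₂+3)) / (1 - RatFunc.X ^ 4) *
              ((1 - RatFunc.X ^ 4) * algebraMap ℚ[X] (RatFunc ℚ) ((1 - X ^ 2) * (1 - X ^ 4)))
          - betaT1 (k₂+3) *
              ((1 - RatFunc.X ^ 4) * algebraMap ℚ[X] (RatFunc ℚ) ((1 - X ^ 2) * (1 - X ^ 4)))
          - betaT2 (k₂+3) *
              ((1 - RatFunc.X ^ 4) * algebraMap ℚ[X] (RatFunc ℚ) ((1 - X ^ 2) * (1 - X ^ 4)))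
          + (2 ^ (2*(k₂+3)) : RatFunc ℚ) *
              (RatFunc.X ^ (6*(k₂+3)) +
                RatFunc.X ^ (4*(k₂+3)-2) * (1 - RatFunc.X ^ 4) * Pn ((k₂+3)-1)) *
              algebraMap ℚ[X] (RatFunc ℚ) ((1 - X ^ 2) * (1 - X ^ 4))
          + (Kg (k₂+3) * RatFunc.X ^ (4*(k₂+3)-4) * (1 - RatFunc.X ^ 2) +
              Jg (k₂+3) * (RatFunc.X ^ (4*(k₂+3)-2) +
                RatFunc.X ^ (2*(k₂+3)-2) * (1 - RatFunc.X ^ 4) * Pn ((k₂+3)-2)) -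
              2 ^ (2*(k₂+3)) *
                (RatFunc.X ^ (6*(k₂+3)-2) +
                  RatFunc.X ^ (4*(k₂+3)-2) * (1 - RatFunc.X ^ 4) * Pn ((k₂+3)-2) +
                  RatFunc.X ^ (4*(k₂+3)-2) * (1 - RatFunc.X ^ 2) * Pn ((k₂+3)-1))) *
              algebraMap ℚ[X] (RatFunc ℚ) ((1 - X ^ 2) * (1 - X ^ 4))
          + (Qg (k₂+3) * algebraMap ℚ[X] (RatFunc ℚ) ((1 - X ^ 2) * (1 - X ^ 4))) *
              RatFunc.X ^ 2 * (1 + 2 * RatFunc.X ^ 2 + RatFunc.X ^ 4) ) := by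
    rw [P12]; simp only [map_pow, map_mul]; ring
  rw [expand, QgD, QgD, hJc, betaT1_clear, betaT2_clear, hC2, hC3]
  simp only [RR, C4, map_mul, map_add, map_sub, map_pow, map_ofNat, map_one,
    RatFunc.algebraMap_X]
  ring

lemma coeff_one_eq (q : ℚ[X]) : q.coeff 1 = q.derivative.eval 0 := by
  rw [← Polynomial.coeff_zero_eq_eval_zero, Polynomial.coeff_derivative]
  simp

lemma ApP_eval0 (k : ℕ) : (ApP (k+3)).eval 0 = 1 := by
  have e : 2*(k+3) = (2*k+5)+1 := by omega
  simp [ApP, e, pow_succ]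

lemma ApP_deriv0 (k : ℕ) : (derivative (ApP (k+3))).eval 0 = 0 := by
  have e : 2*(k+3) = (2*k+5)+1 := by omega
  simp [ApP, e, derivative_pow, pow_succ]

lemma D_eval0 : ((((1:ℚ[X]) - X^2) * (1 - X^4))^2).eval 0 = 1 := by
  simp

lemma D_deriv0 : (derivative ((((1:ℚ[X]) - X^2) * (1 - X^4))^2)).eval 0 = 0 := by
  simp [derivative_pow, pow_succ]


/-- For all integers `g₁, g₂ ≥ 3`, the coefficient of `X¹` in the polynomial representing
`P₁₂(g₁,g₂)` is `0`: the first Betti number of `M₁₂` vanishes, consistent with `M₁₂`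
being simply connected. -/
theorem P12_first_betti_zero (g₁ g₂ : ℕ) (h₁ : 3 ≤ g₁) (h₂ : 3 ≤ g₂) (p : ℚ[X])
    (hp : algebraMap ℚ[X] (RatFunc ℚ) p = P12 g₁ g₂) :
    p.coeff 1 = 0 := by
  obtain ⟨k₁, rfl⟩ : ∃ k, g₁ = k + 3 := ⟨g₁ - 3, by omega⟩
  obtain ⟨k₂, rfl⟩ : ∃ k, g₂ = k + 3 := ⟨g₂ - 3, by omega⟩
  have hk := key k₁ k₂
  rw [← hp, ← map_mul] at hk
  have hpoly : p * (((1:ℚ[X]) - X^2) * (1 - X^4))^2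
      = ApP (k₁+3) * (ApP (k₂+3) * (1 - X^4) + X^2 * RR k₂) :=
    RatFunc.algebraMap_injective ℚ hk
  have hder := congrArg (fun q : ℚ[X] => (derivative q).eval 0) hpoly
  simp only [derivative_mul, eval_add, eval_mul, D_eval0, D_deriv0, ApP_eval0, ApP_deriv0,
    mul_one, mul_zero, add_zero, zero_mul, zero_add, one_mul] at hder
  rw [coeff_one_eq]
  rw [hder]
  simp [derivative_pow, pow_succ, ApP_eval0, ApP_deriv0]
end

section
/- For (g₁, g₂) = (3, 3), the polynomial representing P₁₂(3,3) equals 1 + 3X² + 12X³ + 8X⁴ + 36X⁵ + 81X⁶ + 90X⁷ + 207X⁸ + 356X⁹ + 435X¹⁰ + 698X¹¹ + 992X¹² + 1120X¹³ + 1345X¹⁴ + 1520X¹⁵ + 1345X¹⁶ + 1120X¹⁷ + 992X¹⁸ + 698X¹⁹ + 435X²⁰ + 356X²¹ + 207X²² + 90X²³ + 81X²⁴ + 36X²⁵ + 8X²⁶ + 12X²⁷ + 3X²⁸ + X³⁰; in particular the Betti numbers B₀,…,B₃₀ of M₁₂ are 1, 0, 3, 12, 8, 36, 81, 90, 207, 356,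 435, 698, 992, 1120, 1345, 1520, 1345, 1120, 992, 698, 435, 356, 207, 90, 81, 36, 8, 12, 3, 0, 1. -/
open Polynomial

set_option maxHeartbeats 8000000

/-- For `(g₁, g₂) = (3, 3)`, the polynomial representing `P₁₂(3,3)` equals
`1 + 3X² + 12X³ + 8X⁴ + 36X⁵ + 81X⁶ + 90X⁷ + 207X⁸ + 356X⁹ + 435X¹⁰ + 698X¹¹ + 992X¹²
 + 1120X¹³ + 1345X¹⁴ + 1520X¹⁵ + 1345X¹⁶ + 1120X¹⁷ + 992X¹⁸ + 698X¹⁹ + 435X²⁰ + 356X²¹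
 + 207X²² + 90X²³ + 81X²⁴ + 36X²⁵ + 8X²⁶ + 12X²⁷ + 3X²⁸ + X³⁰`;
in particular these coefficients are the Betti numbers `B₀,…,B₃₀` of `M₁₂`. -/
theorem P12_three_three (p : ℚ[X])
    (hp : algebraMap ℚ[X] (RatFunc ℚ) p = P12 3 3) :
    p = 1 + 3 * X ^ 2 + 12 * X ^ 3 + 8 * X ^ 4 + 36 * X ^ 5 + 81 * X ^ 6 + 90 * X ^ 7 +
      207 * X ^ 8 + 356 * X ^ 9 + 435 * X ^ 10 + 698 * X ^ 11 + 992 * X ^ 12 +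
      1120 * X ^ 13 + 1345 * X ^ 14 + 1520 * X ^ 15 + 1345 * X ^ 16 + 1120 * X ^ 17 +
      992 * X ^ 18 + 698 * X ^ 19 + 435 * X ^ 20 + 356 * X ^ 21 + 207 * X ^ 22 +
      90 * X ^ 23 + 81 * X ^ 24 + 36 * X ^ 25 + 8 * X ^ 26 + 12 * X ^ 27 + 3 * X ^ 28 +
      X ^ 30 := by
  have hA : (1 - RatFunc.X ^ 2 : RatFunc ℚ) ≠ 0 := by
    have : ((1 : ℚ[X]) - X ^ 2) ≠ 0 := by
      intro h; have := congrArg (Polynomial.eval 0) h; simp at this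
    simpa using RatFunc.algebraMap_ne_zero this
  have hB : (1 - RatFunc.X ^ 4 : RatFunc ℚ) ≠ 0 := by
    have : ((1 : ℚ[X]) - X ^ 4) ≠ 0 := by
      intro h; have := congrArg (Polynomial.eval 0) h; simp at this
    simpa using RatFunc.algebraMap_ne_zero this
  have hC : (1 + RatFunc.X ^ 2 : RatFunc ℚ) ≠ 0 := by
    have : ((1 : ℚ[X]) + X ^ 2) ≠ 0 := by
      intro h; have := congrArg (Polynomial.eval 0) h; simp at this
    simpa using RatFunc.algebraMap_ne_zero this
  have hAB : ((1 - RatFunc.X ^ 2) * (1 - RatFunc.X ^ 4) : RatFunc ℚ) ≠ 0 := mul_ne_zero hA hB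
  have hQ : Qg 3 = 1 + RatFunc.X ^ 2 + 6 * RatFunc.X ^ 3 + 2 * RatFunc.X ^ 4 +
      6 * RatFunc.X ^ 5 + 16 * RatFunc.X ^ 6 + 6 * RatFunc.X ^ 7 + 2 * RatFunc.X ^ 8 +
      6 * RatFunc.X ^ 9 + RatFunc.X ^ 10 + RatFunc.X ^ 12 := by
    rw [Qg, div_eq_iff hAB, show (2 * 3 : ℕ) = 6 from rfl]
    ring
  have hK : Kg 3 = 1 + 79 * RatFunc.X ^ 2 + 79 * RatFunc.X ^ 4 + RatFunc.X ^ 6 := by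
    have hset : (Finset.Ioo 0 (2 * 3)).filter (fun i => Even i) = {2, 4} := by decide
    rw [Kg, hset, show (2 * 3 : ℕ) = 6 from rfl]
    rw [Finset.sum_insert (by decide : (2 : ℕ) ∉ ({4} : Finset ℕ)), Finset.sum_singleton]
    norm_num [Nat.choose]
    ring
  have hJ : Jg 3 = (1 + RatFunc.X) ^ 6 := rfl
  have hP1 : Pn (3 - 2) = 1 + RatFunc.X ^ 2 := by
    rw [Pn]
    rw [show (3 - 2 : ℕ) + 1 = 2 from rfl, Finset.sum_range_succ, Finset.sum_range_one]
    norm_num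
  have hP2 : Pn (3 - 1) = 1 + RatFunc.X ^ 2 + RatFunc.X ^ 4 := by
    rw [Pn]
    rw [show (3 - 1 : ℕ) + 1 = 3 from rfl, Finset.sum_range_succ, Finset.sum_range_succ,
      Finset.sum_range_one]
    norm_num
  have hmid : Qg 3 + Jg 3 * RatFunc.X ^ (2 * 3) / (1 - RatFunc.X ^ 4) -
      (betaT1 3 + betaT2 3) =
      1 + RatFunc.X ^ 2 + 6 * RatFunc.X ^ 3 + RatFunc.X ^ 4 + RatFunc.X ^ 6 -
        14 * RatFunc.X ^ 7 - 14 * RatFunc.X ^ 8 - 14 * RatFunc.X ^ 10 := by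
    rw [betaT1, betaT2, hQ, hK, hJ, hP1, hP2,
      show (2 * 3 : ℕ) = 6 from rfl, show (4 * 3 - 4 : ℕ) = 8 from rfl,
      show (4 * 3 - 2 : ℕ) = 10 from rfl, show (2 * 3 - 2 : ℕ) = 4 from rfl,
      show (6 * 3 - 2 : ℕ) = 16 from rfl, show (6 * 3 : ℕ) = 18 from rfl]
    have ha' : ((1 + RatFunc.X ^ 2) : RatFunc ℚ) * (1 + RatFunc.X ^ 2)⁻¹ = 1 :=
      mul_inv_cancel₀ hC
    have hb' : ((1 - RatFunc.X ^ 4) : RatFunc ℚ) * (1 - RatFunc.X ^ 4)⁻¹ = 1 :=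
      mul_inv_cancel₀ hB
    refine mul_right_cancel₀ (mul_ne_zero hC hB) ?_
    linear_combination
      (((-(1 + 79 * RatFunc.X ^ 2 + 79 * RatFunc.X ^ 4 + RatFunc.X ^ 6) * RatFunc.X ^ 8 +
          64 * (1 + RatFunc.X ^ 2 + RatFunc.X ^ 4) * RatFunc.X ^ 10) *
        (1 - RatFunc.X ^ 4)) : RatFunc ℚ) * ha' +
      ((((1 + RatFunc.X) ^ 6 * RatFunc.X ^ 6 - (1 + RatFunc.X) ^ 6 * RatFunc.X ^ 10 +
          64 * RatFunc.X ^ 16 - 64 * RatFunc.X ^ 18) *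
        (1 + RatFunc.X ^ 2)) : RatFunc ℚ) * hb'
  have key : algebraMap ℚ[X] (RatFunc ℚ)
      (1 + 3 * X ^ 2 + 12 * X ^ 3 + 8 * X ^ 4 + 36 * X ^ 5 + 81 * X ^ 6 + 90 * X ^ 7 +
      207 * X ^ 8 + 356 * X ^ 9 + 435 * X ^ 10 + 698 * X ^ 11 + 992 * X ^ 12 +
      1120 * X ^ 13 + 1345 * X ^ 14 + 1520 * X ^ 15 + 1345 * X ^ 16 + 1120 * X ^ 17 +
      992 * X ^ 18 + 698 * X ^ 19 + 435 * X ^ 20 + 356 * X ^ 21 + 207 * X ^ 22 +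
      90 * X ^ 23 + 81 * X ^ 24 + 36 * X ^ 25 + 8 * X ^ 26 + 12 * X ^ 27 + 3 * X ^ 28 +
      X ^ 30) = P12 3 3 := by
    rw [P12, hmid, hQ, hK, hJ, hP1, hP2,
      show (2 * 3 : ℕ) = 6 from rfl, show (4 * 3 - 4 : ℕ) = 8 from rfl,
      show (4 * 3 - 2 : ℕ) = 10 from rfl, show (2 * 3 - 2 : ℕ) = 4 from rfl,
      show (6 * 3 - 2 : ℕ) = 16 from rfl, show (6 * 3 : ℕ) = 18 from rfl]
    simp only [map_add, map_mul, map_pow, map_sub, map_one, map_ofNat, RatFunc.algebraMap_X]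
    ring
  exact IsFractionRing.injective ℚ[X] (RatFunc ℚ) (hp.trans key.symm)
end
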